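/- arXiv:2301.05077 — 2 statements merged into one kernel-verified Lean document; each statement's English description precedes it below -/
import Mathlib

section
/- Let T be a positive integer, let d : Fin T → ℝ be a nonnegative demand profile with total demand D = ∑_{t} d(t) > 0, and suppose the per-period serving capacity is sized for a uniform demand distribution, i.e. c = D/T. Then the total unserved demand ∑_{t} max(d(t) − c, 0) is at most D·(1 − 1/T). (This is the upper-bound part of Theorem 1: when the charging capacity deployed by the single-period model is implemented, the fraction of demand that does not find an available charger may be up to 1 − 1/T but not more.) -/
/-- Upper-bound part of Theorem 1: with per-period capacity `c = D/T` sized for a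
uniform distribution of the total demand `D = ∑ t, d t`, the total unserved demand
`∑ t, max (d t - c) 0` is at most `D * (1 - 1/T)`. -/
theorem sp_cfl_unserved_demand_upper_bound
    (T : ℕ) (hT : 0 < T) (d : Fin T → ℝ) (hd : ∀ t, 0 ≤ d t)
    (D : ℝ) (hD : D = ∑ t, d t) (hDpos : 0 < D)
    (c : ℝ) (hc : c = D / T) :
    ∑ t, max (d t - c) 0 ≤ D * (1 - 1 / T) := by
  have hTR : (0:ℝ) < (T:ℝ) := by exact_mod_cast hT
  -- there exists a period with demand at least the average c
  have hsum_const : ∑ _t : Fin T, c = (T:ℝ) * c := by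
    simp [Finset.sum_const, mul_comm]
  have hsum_eq : ∑ _t : Fin T, c = ∑ t, d t := by
    rw [hsum_const, hc, ← hD]
    field_simp
  haveI : Nonempty (Fin T) := ⟨⟨0, hT⟩⟩
  have hcpos : 0 < c := by rw [hc]; positivity
  obtain ⟨t0, _, ht0⟩ := Finset.exists_le_of_sum_le (Finset.univ_nonempty)
    (le_of_eq hsum_eq)
  -- split off t0
  have key : ∑ t, max (d t - c) 0 ≤ (∑ t, d t) - c := by
    have h1 : ∑ t, max (d t - c) 0
        = max (d t0 - c) 0 + ∑ t ∈ Finset.univ.erase t0, max (d t - c) 0 := by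
      exact (Finset.add_sum_erase _ (fun t => max (d t - c) 0) (Finset.mem_univ t0)).symm
    have h2 : ∑ t, d t = d t0 + ∑ t ∈ Finset.univ.erase t0, d t := by
      rw [Finset.add_sum_erase _ _ (Finset.mem_univ t0)]
    rw [h1, h2]
    have h3 : max (d t0 - c) 0 = d t0 - c := max_eq_left (by linarith)
    have h4 : ∑ t ∈ Finset.univ.erase t0, max (d t - c) 0
        ≤ ∑ t ∈ Finset.univ.erase t0, d t := by
      refine Finset.sum_le_sum fun t _ => ?_
      exact max_le (by linarith [hd t]) (hd t)
    linarith
  have : D * (1 - 1 / T) = (∑ t, d t) - c := by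
    rw [← hD, hc]; field_simp
  linarith
end

section
/- Let T be a positive integer, let D > 0, and let c = D/T be the per-period serving capacity. If the demand profile d : Fin T → ℝ is concentrated in a single period t̂, i.e. d(t̂) = D and d(t) = 0 for every t ≠ t̂, then the total unserved demand ∑_{t} max(d(t) − c, 0) equals exactly D·(1 − 1/T). (This is the tightness part of Theorem 1: the worst-case bound 1 − 1/T on the unserved fraction of demand is attained.) -/
/-- Tightness part of Theorem 1: if the whole demand `D` arises in a single period
`tpeak` while the per-period capacity is `c = D/T`, then the total unserved demand
equals exactly `D * (1 - 1/T)`. -/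
theorem sp_cfl_unserved_demand_bound_tight
    (T : ℕ) (hT : 0 < T) (D : ℝ) (hDpos : 0 < D)
    (c : ℝ) (hc : c = D / T)
    (d : Fin T → ℝ) (tpeak : Fin T)
    (hpeak : d tpeak = D) (hzero : ∀ t, t ≠ tpeak → d t = 0) :
    ∑ t, max (d t - c) 0 = D * (1 - 1 / T) := by
  have hTpos : (0:ℝ) < T := by exact_mod_cast hT
  have hc' : 0 < c := by rw [hc]; positivity
  have hcle : c ≤ D := by
    rw [hc, div_le_iff₀ hTpos]
    nlinarith [(by exact_mod_cast hT : (1:ℝ) ≤ T)]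
  rw [Finset.sum_eq_single tpeak]
  · rw [hpeak, max_eq_left (by linarith), hc]
    field_simp
  · intro t _ ht
    rw [hzero t ht, max_eq_right (by linarith)]
  · intro h; exact absurd (Finset.mem_univ tpeak) h
end
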